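/- arXiv:2308.15303 — 3 statements merged into one kernel-verified Lean document; each statement's English description precedes it below -/
import Mathlib

section
/- Lehmer's theorem for distinct parts: the reciprocal norm statistic summed over partitions of size n into distinct parts, W**_size(n) = ∑_{λ : |λ| = n, parts of λ pairwise distinct} 1/N(λ), tends to e^{-γ} as n → ∞. -/
open Filter

/-- The norm of a partition (given as a multiset of positive integer parts):
the product of its parts. -/
def partitionNorm (m : Multiset ℕ+) : ℕ :=
  (m.map (fun i : ℕ+ => (i : ℕ))).prod

/-- The size of a partition: the sum of its parts. -/
def partitionSize (m : Multiset ℕ+) : ℕ :=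
  (m.map (fun i : ℕ+ => (i : ℕ))).sum

/-- `W**_size(n)`: the sum of reciprocal norms over all partitions of size `n`
with pairwise distinct parts. -/
noncomputable def WsizeStarStar (n : ℕ) : ℝ :=
  ∑' lam : {m : Multiset ℕ+ // partitionSize m = n ∧ m.Nodup},
    (1 : ℝ) / (partitionNorm lam.1 : ℝ)

noncomputable section

open Finset PowerSeries

namespace LehmerAux


/-- The factor `1 + x^k/k`. -/
def gfac (k : ℕ) : PowerSeries ℝ := 1 + C (1/(k:ℝ)) * X ^ k

/-- Coefficients of the logarithmic derivative of `gfac k`. -/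
def vco (k n : ℕ) : ℝ :=
  if k ∣ (n+1) then (-1 : ℝ)^((n+1)/k+1) * (1/(k:ℝ))^((n+1)/k - 1) else 0

def V (k : ℕ) : PowerSeries ℝ := mk (vco k)

def U : PowerSeries ℝ := mk (fun _ => (-1 : ℝ))

lemma vco_of_eq {k j n : ℕ} (hk : k ≠ 0) (h : n + 1 = j * k) :
    vco k n = (-1 : ℝ)^(j+1) * (1/(k:ℝ))^(j-1) := by
  have hd : k ∣ n + 1 := ⟨j, by rw [h, mul_comm]⟩
  have hj : (n+1)/k = j := by rw [h, Nat.mul_div_cancel _ (Nat.pos_of_ne_zero hk)]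
  simp [vco, hd, hj]

lemma vco_of_not_dvd {k n : ℕ} (h : ¬ k ∣ (n+1)) : vco k n = 0 := by simp [vco, h]

lemma coeff_gfac (k : ℕ) (hk : k ≠ 0) (m : ℕ) :
    coeff m (gfac k) = if m = 0 then 1 else if m = k then 1/(k:ℝ) else 0 := by
  rw [gfac, map_add, coeff_one, coeff_C_mul, coeff_X_pow]
  rcases eq_or_ne m 0 with rfl | hm
  · simp [hk, Ne.symm hk]
  · simp only [hm, if_false]
    rcases eq_or_ne m k with rfl | hmk
    · simp
    · simp [hmk]

lemma gfac_ode {k : ℕ} (hk : k ≠ 0) : d⁄dX ℝ (gfac k) = V k * gfac k := by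
  have hk' : (k : ℝ) ≠ 0 := Nat.cast_ne_zero.mpr hk
  have hk1 : 1 ≤ k := Nat.pos_of_ne_zero hk
  ext n
  have hL : coeff n (d⁄dX ℝ (gfac k)) = if n + 1 = k then 1 else 0 := by
    rw [coeff_derivative, coeff_gfac k hk]
    rcases eq_or_ne (n+1) k with h | h
    · simp only [Nat.succ_ne_zero, if_false, h, if_pos rfl]
      push_cast [← h]
      field_simp
    · simp [h]
  have hR : coeff n (V k * gfac k)
      = vco k n + (1/(k:ℝ)) * (if k ≤ n then vco k (n-k) else 0) := by
    have hve : V k * gfac k = V k + C (1/(k:ℝ)) * (V k * X ^ k) := by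
      rw [gfac]; ring
    rw [hve, map_add, coeff_C_mul, coeff_mul_X_pow']
    rcases le_or_gt k n with h | h
    · simp [h, V, coeff_mk]
    · simp [not_le.mpr h, V, coeff_mk]
  rw [hL, hR]
  by_cases hd : k ∣ n + 1
  · obtain ⟨j, hj⟩ := hd
    have hj0 : j ≠ 0 := by rintro rfl; simp at hj
    rcases eq_or_ne j 1 with rfl | hj1
    · -- n + 1 = k
      rw [mul_one] at hj
      have h1 : vco k n = 1 := by
        rw [vco_of_eq hk (j := 1) (by rw [one_mul]; exact hj)]; norm_num
      have h2 : ¬ k ≤ n := by omega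
      simp [hj, h1, h2]
    · -- j ≥ 2
      have hj2 : 2 ≤ j := by omega
      have hjk : n + 1 = j * k := by rw [hj, mul_comm]
      have h2k : k * 2 ≤ k * j := Nat.mul_le_mul_left k hj2
      have hkn : k ≤ n := by omega
      have hne : n + 1 ≠ k := by omega
      have h1 : vco k n = (-1 : ℝ)^(j+1) * (1/(k:ℝ))^(j-1) := vco_of_eq hk hjk
      have hsub : (j-1) * k = j * k - k := by rw [Nat.sub_one_mul]
      have h2 : vco k (n - k) = (-1 : ℝ)^j * (1/(k:ℝ))^(j-2) := by
        have hh := vco_of_eq hk (k := k) (j := j - 1) (n := n - k) (by omega)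
        have ej : j - 1 + 1 = j := by omega
        have ej2 : j - 1 - 1 = j - 2 := by omega
        rw [hh, ej, ej2]
      rw [h1, h2, if_pos hkn, if_neg hne]
      obtain ⟨i, rfl⟩ : ∃ i, j = i + 2 := ⟨j - 2, by omega⟩
      have e1 : i + 2 + 1 = i + 3 := by omega
      have e2 : i + 2 - 1 = i + 1 := by omega
      have e3 : i + 2 - 2 = i := by omega
      rw [e1, e2, e3]
      ring
  · have h1 : vco k n = 0 := vco_of_not_dvd hd
    have h2 : ∀ _ : k ≤ n, vco k (n - k) = 0 := by
      intro hkn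
      refine vco_of_not_dvd ?_
      rintro ⟨c, hc⟩
      refine hd ⟨c+1, ?_⟩
      rw [Nat.mul_succ]; omega
    have hne : n + 1 ≠ k := by rintro rfl; exact hd dvd_rfl
    rcases le_or_gt k n with h | h
    · simp [h1, h2 h, hne]
    · simp [h1, not_le.mpr h, hne]

lemma oneSubX_ode : d⁄dX ℝ (1 - X : PowerSeries ℝ) = U * (1 - X) := by
  ext n
  have hL : coeff n (d⁄dX ℝ (1 - X : PowerSeries ℝ)) = if n = 0 then -1 else 0 := by
    rw [coeff_derivative, map_sub, coeff_one, coeff_X]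
    rcases eq_or_ne n 0 with rfl | hn
    · norm_num
    · simp [hn, Nat.succ_ne_zero]
  have hR : coeff n (U * (1 - X)) = if n = 0 then -1 else 0 := by
    have hve : U * (1 - X : PowerSeries ℝ) = U - U * X ^ 1 := by ring
    rw [hve, map_sub, coeff_mul_X_pow']
    rcases eq_or_ne n 0 with rfl | hn
    · simp [U, coeff_mk]
    · have h1 : 1 ≤ n := Nat.one_le_iff_ne_zero.mpr hn
      simp [U, coeff_mk, h1, hn]
  rw [hL, hR]

/-- Product rule for logarithmic derivatives over a finset. -/
lemma prod_ode {ι : Type} (s : Finset ι) (f u : ι → PowerSeries ℝ)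
    (h : ∀ i ∈ s, d⁄dX ℝ (f i) = u i * f i) :
    d⁄dX ℝ (∏ i ∈ s, f i) = (∑ i ∈ s, u i) * ∏ i ∈ s, f i := by
  induction s using Finset.cons_induction with
  | empty => simp
  | cons a s hni ih =>
    rw [Finset.prod_cons, Finset.sum_cons]
    rw [Derivation.leibniz, smul_eq_mul, smul_eq_mul,
      ih (fun i hi => h i (Finset.mem_cons_of_mem hi)),
      h a (Finset.mem_cons_self a s)]
    ring


/-- Partial product over `2 ≤ k ≤ N`. -/
def PP (N : ℕ) : PowerSeries ℝ := ∏ k ∈ Icc 2 N, gfac k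

def Phi (N : ℕ) : PowerSeries ℝ := (1 - X) * PP N

lemma ode_Phi (N : ℕ) : d⁄dX ℝ (Phi N) = (U + ∑ k ∈ Icc 2 N, V k) * Phi N := by
  rw [Phi, PP, Derivation.leibniz, smul_eq_mul, smul_eq_mul, oneSubX_ode,
    prod_ode _ _ V (fun i hi => gfac_ode (by
      have := (Finset.mem_Icc.mp hi).1; omega))]
  ring

def Wgen (n : ℕ) : ℝ := -1 + ∑ k ∈ Icc 2 (n+1), vco k n

lemma vco_zero_of_big {k n : ℕ} (h : n + 1 < k) : vco k n = 0 := by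
  refine vco_of_not_dvd fun hd => ?_
  have := Nat.le_of_dvd (Nat.succ_pos n) hd
  omega

lemma coeff_gen {N n : ℕ} (h : n + 1 ≤ N) :
    coeff n (U + ∑ k ∈ Icc 2 N, V k) = Wgen n := by
  rw [map_add, map_sum]
  have h1 : coeff n U = -1 := by simp [U, coeff_mk]
  have h2 : ∀ k, coeff n (V k) = vco k n := fun k => by simp [V, coeff_mk]
  simp_rw [h2, h1, Wgen]
  congr 1
  exact (Finset.sum_subset (Finset.Icc_subset_Icc_right h) (fun k hk hk' => by
    simp only [Finset.mem_Icc] at hk hk'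
    exact vco_zero_of_big (by omega))).symm

lemma coeff_mul_gfac {f : PowerSeries ℝ} {k n : ℕ} (h : n < k) :
    coeff n (f * gfac k) = coeff n f := by
  have hve : f * gfac k = f + C (1/(k:ℝ)) * (f * X ^ k) := by rw [gfac]; ring
  rw [hve, map_add, coeff_C_mul, coeff_mul_X_pow', if_neg (by omega)]
  ring

/-- Stabilized coefficients of `∏_{k≥2}(1+x^k/k)`. -/
def b (n : ℕ) : ℝ := coeff n (PP (n+1))

/-- Stabilized coefficients of `(1-x)∏_{k≥2}(1+x^k/k)`. -/
def G (n : ℕ) : ℝ := coeff n (Phi (n+1))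

lemma coeff_PP {n N : ℕ} (h : n + 1 ≤ N) : coeff n (PP N) = b n := by
  induction N, h using Nat.le_induction with
  | base => rfl
  | succ N hN ih =>
    rw [PP, Finset.prod_Icc_succ_top (by omega), ← PP, coeff_mul_gfac (by omega), ih]

lemma coeff_Phi {n N : ℕ} (h : n + 1 ≤ N) : coeff n (Phi N) = G n := by
  induction N, h using Nat.le_induction with
  | base => rfl
  | succ N hN ih =>
    rw [Phi, PP, Finset.prod_Icc_succ_top (by omega), ← PP, ← mul_assoc, ← Phi,
      coeff_mul_gfac (by omega), ih]

lemma G_rec (n : ℕ) :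
    ((n:ℝ)+1) * G (n+1) = ∑ i ∈ range (n+1), Wgen i * G (n - i) := by
  have h1 : ((n:ℝ)+1) * G (n+1) = coeff n (d⁄dX ℝ (Phi (n+2))) := by
    rw [coeff_derivative, coeff_Phi (by omega)]; ring
  rw [h1, ode_Phi, coeff_mul]
  rw [← Nat.sum_antidiagonal_eq_sum_range_succ_mk (fun p => Wgen p.1 * G p.2)]
  refine Finset.sum_congr rfl fun p hp => ?_
  rw [Finset.HasAntidiagonal.mem_antidiagonal] at hp
  rw [coeff_gen (by omega), coeff_Phi (by omega)]

/-- Coefficients of `H`, with `exp H = (1-x)∏_{k≥2}(1+x^k/k)`. -/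
def Hc (m : ℕ) : ℝ := if m = 0 then 0 else Wgen (m-1) / m

def HP : PowerSeries ℝ := mk Hc

lemma coeff_dHP (n : ℕ) : coeff n (d⁄dX ℝ HP) = Wgen n := by
  rw [coeff_derivative, HP, coeff_mk, Hc, if_neg (Nat.succ_ne_zero n)]
  have : ((n:ℝ)+1) ≠ 0 := by positivity
  field_simp
  rw [Nat.add_sub_cancel]; push_cast; ring

lemma coeff_HP_pow_eq_zero {m n : ℕ} (h : n < m) : coeff n (HP ^ m) = 0 := by
  have hX : (X : PowerSeries ℝ) ∣ HP := by
    rw [X_dvd_iff]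
    simp [HP, ← coeff_zero_eq_constantCoeff_apply, coeff_mk, Hc]
  exact X_pow_dvd_iff.mp (pow_dvd_pow_of_dvd hX m) n h

/-- Coefficients of `exp H`. -/
def E (n : ℕ) : ℝ := ∑ m ∈ range (n+1), coeff n (HP ^ m) / (m.factorial : ℝ)

lemma E_zero : E 0 = 1 := by simp [E]

lemma G_zero : G 0 = 1 := by
  rw [G, Phi]
  norm_num [PP]

lemma E_rec (n : ℕ) :
    ((n:ℝ)+1) * E (n+1) = ∑ i ∈ range (n+1), Wgen i * E (n - i) := by
  have step1 : ((n:ℝ)+1) * E (n+1)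
      = ∑ m ∈ range (n+2), coeff n (d⁄dX ℝ (HP ^ m)) / (m.factorial : ℝ) := by
    rw [E, Finset.mul_sum]
    refine Finset.sum_congr rfl fun m _ => ?_
    rw [coeff_derivative]
    ring
  have step2 : ∑ m ∈ range (n+2), coeff n (d⁄dX ℝ (HP ^ m)) / (m.factorial : ℝ)
      = ∑ m ∈ range (n+1), coeff n (HP ^ m * d⁄dX ℝ HP) / (m.factorial : ℝ) := by
    rw [Finset.sum_range_succ' (fun m => coeff n (d⁄dX ℝ (HP ^ m)) / (m.factorial : ℝ)) (n+1)]
    rw [pow_zero, Derivation.map_one_eq_zero]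
    simp only [map_zero, zero_div, add_zero]
    refine Finset.sum_congr rfl fun m _ => ?_
    rw [Derivation.leibniz_pow, Nat.add_sub_cancel, map_nsmul, nsmul_eq_mul, smul_eq_mul,
      Nat.factorial_succ]
    push_cast
    have hm : ((m:ℝ)+1) ≠ 0 := by positivity
    have hf : ((m.factorial :ℝ)) ≠ 0 := Nat.cast_ne_zero.mpr m.factorial_ne_zero
    field_simp
  have step3 : ∀ m, coeff n (HP ^ m * d⁄dX ℝ HP)
      = ∑ p ∈ antidiagonal n, coeff p.1 (HP ^ m) * Wgen p.2 := by
    intro m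
    rw [coeff_mul]
    exact Finset.sum_congr rfl fun p _ => by rw [coeff_dHP]
  rw [step1, step2]
  have step4 : ∑ m ∈ range (n+1), coeff n (HP ^ m * d⁄dX ℝ HP) / (m.factorial : ℝ)
      = ∑ p ∈ antidiagonal n, E p.1 * Wgen p.2 := by
    simp_rw [step3, Finset.sum_div, div_eq_mul_inv]
    rw [Finset.sum_comm]
    refine Finset.sum_congr rfl fun p hp => ?_
    rw [Finset.HasAntidiagonal.mem_antidiagonal] at hp
    have hE : E p.1 = ∑ m ∈ range (n+1), coeff p.1 (HP ^ m) / (m.factorial : ℝ) := by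
      rw [E]
      refine Finset.sum_subset (by
        apply Finset.range_subset_range.mpr; omega) fun m _ hm => ?_
      rw [Finset.mem_range, not_lt] at hm
      rw [coeff_HP_pow_eq_zero (by omega), zero_div]
    rw [hE, Finset.sum_mul]
    refine Finset.sum_congr rfl fun m _ => by ring
  rw [step4, ← Nat.sum_antidiagonal_swap]
  rw [← Nat.sum_antidiagonal_eq_sum_range_succ_mk (fun p => Wgen p.1 * E p.2)]
  refine Finset.sum_congr rfl fun p hp => ?_
  simp [mul_comm]

lemma G_eq_E : ∀ n, G n = E n := by
  intro n
  induction n using Nat.strong_induction_on with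
  | _ n ih =>
    match n with
    | 0 => rw [G_zero, E_zero]
    | Nat.succ n =>
      have h1 := G_rec n
      have h2 := E_rec n
      have h3 : ∑ i ∈ range (n+1), Wgen i * G (n - i)
          = ∑ i ∈ range (n+1), Wgen i * E (n - i) :=
        Finset.sum_congr rfl fun i _ => by rw [ih (n - i) (by omega)]
      have hne : ((n:ℝ)+1) ≠ 0 := by positivity
      exact mul_left_cancel₀ hne (by rw [h1, h3, ← h2])

lemma b_zero : b 0 = 1 := by norm_num [b, PP]

lemma G_succ_eq (n : ℕ) : G (n+1) = b (n+1) - b n := by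
  have h : Phi (n+2) = PP (n+2) - PP (n+2) * X ^ 1 := by rw [Phi]; ring
  have hG : G (n+1) = coeff (n+1) (Phi (n+2)) := rfl
  rw [hG, h, map_sub, coeff_mul_X_pow',
    if_pos (by omega), coeff_PP (by omega), Nat.add_sub_cancel, coeff_PP (by omega)]

lemma b_eq_sum_E (n : ℕ) : b n = ∑ m ∈ range (n+1), E m := by
  induction n with
  | zero => rw [b_zero]; simp [E_zero]
  | succ n ih =>
    rw [Finset.sum_range_succ, ← ih, ← G_eq_E, G_succ_eq]
    ring

/-- Full product over `1 ≤ k ≤ N`. -/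
def FP (N : ℕ) : PowerSeries ℝ := ∏ k ∈ Icc 1 N, gfac k

lemma FP_eq {N : ℕ} (h : 1 ≤ N) : FP N = gfac 1 * PP N := by
  rw [FP, PP, ← Finset.Ico_add_one_right_eq_Icc, Finset.prod_eq_prod_Ico_succ_bot (by omega),
    Finset.Ico_add_one_right_eq_Icc]

lemma gfac_one : gfac 1 = 1 + X := by
  rw [gfac]
  norm_num

/-- Stabilized coefficients of the full product. -/
def a (n : ℕ) : ℝ := coeff n (FP (n+1))

lemma coeff_FP {n N : ℕ} (h : n + 1 ≤ N) : coeff n (FP N) = a n := by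
  induction N, h using Nat.le_induction with
  | base => rfl
  | succ N hN ih =>
    rw [FP, Finset.prod_Icc_succ_top (by omega), ← FP, coeff_mul_gfac (by omega), ih]

lemma a_zero : a 0 = 1 := by norm_num [a, FP, gfac_one]

lemma a_succ (n : ℕ) : a (n+1) = b (n+1) + b n := by
  have h : FP (n+2) = PP (n+2) + PP (n+2) * X ^ 1 := by
    rw [FP_eq (by omega), gfac_one]; ring
  have hA : a (n+1) = coeff (n+1) (FP (n+2)) := rfl
  rw [hA, h, map_add, coeff_mul_X_pow',
    if_pos (by omega), coeff_PP (by omega), Nat.add_sub_cancel, coeff_PP (by omega)]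



lemma coeff_one_add_mul (c : ℝ) (w n : ℕ) (f : PowerSeries ℝ) :
    coeff n ((1 + C c * X ^ w) * f)
      = coeff n f + c * (if w ≤ n then coeff (n-w) f else 0) := by
  have hve : (1 + C c * X ^ w) * f = f + C c * (f * X ^ w) := by ring
  rw [hve, map_add, coeff_C_mul, coeff_mul_X_pow']

lemma coeff_prod_one_add {ι : Type} [DecidableEq ι] (s : Finset ι) (w : ι → ℕ) (c : ι → ℝ) :
    ∀ n : ℕ, coeff n (∏ i ∈ s, (1 + C (c i) * X ^ (w i)))
      = ∑ T ∈ s.powerset.filter (fun T => ∑ i ∈ T, w i = n), ∏ i ∈ T, c i := by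
  induction s using Finset.induction_on with
  | empty =>
    intro n
    rcases eq_or_ne n 0 with rfl | hn
    · rw [Finset.prod_empty, Finset.powerset_empty, Finset.filter_singleton,
        if_pos (by simp)]
      simp
    · rw [Finset.prod_empty, Finset.powerset_empty, Finset.filter_singleton,
        if_neg (by simp [Ne.symm hn]), Finset.sum_empty, coeff_one, if_neg hn]
  | insert q s hni ih =>
    intro n
    have hdisj : Disjoint (s.powerset.filter (fun T => ∑ i ∈ T, w i = n))
        ((s.powerset.image (insert q)).filter (fun T => ∑ i ∈ T, w i = n)) := by
      rw [Finset.disjoint_left]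
      intro T hT hT'
      rw [Finset.mem_filter, Finset.mem_powerset] at hT
      rw [Finset.mem_filter, Finset.mem_image] at hT'
      obtain ⟨⟨T', _, rfl⟩, -⟩ := hT'
      exact hni (hT.1 (Finset.mem_insert_self q T'))
    rw [Finset.prod_insert hni, coeff_one_add_mul, ih n, Finset.powerset_insert,
      Finset.filter_union, Finset.sum_union hdisj]
    congr 1
    rw [Finset.filter_image, Finset.sum_image (by
      intro T hT T' hT' h
      rw [Finset.mem_coe, Finset.mem_filter, Finset.mem_powerset] at hT hT'
      have haT : q ∉ T := fun hmem => hni (hT.1 hmem)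
      have haT' : q ∉ T' := fun hmem => hni (hT'.1 hmem)
      rw [← Finset.erase_insert haT, ← Finset.erase_insert haT', h])]
    have hconv : ∀ T ∈ s.powerset.filter (fun T => ∑ i ∈ insert q T, w i = n),
        ∏ i ∈ insert q T, c i = c q * ∏ i ∈ T, c i := by
      intro T hT
      rw [Finset.mem_filter, Finset.mem_powerset] at hT
      exact Finset.prod_insert (fun hmem => hni (hT.1 hmem))
    rw [Finset.sum_congr rfl hconv, ← Finset.mul_sum]
    rcases le_or_gt (w q) n with hw | hw
    · rw [if_pos hw, ih (n - w q)]
      congr 1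
      refine (Finset.sum_congr ?_ (fun _ _ => rfl))
      apply Finset.filter_congr
      intro T hT
      rw [Finset.mem_powerset] at hT
      have haT : q ∉ T := fun hmem => hni (hT hmem)
      rw [Finset.sum_insert haT]
      omega
    · rw [if_neg (not_le.mpr hw), mul_zero]
      symm
      rw [Finset.filter_false_of_mem, Finset.sum_empty, mul_zero]
      intro T hT
      rw [Finset.mem_powerset] at hT
      have haT : q ∉ T := fun hmem => hni (hT hmem)
      rw [Finset.sum_insert haT]
      omega

lemma a_eq_sum (n : ℕ) :
    a n = ∑ T ∈ (Icc 1 (n+1)).powerset.filter (fun T => ∑ i ∈ T, i = n),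
      ∏ i ∈ T, (1/(i:ℝ)) := by
  rw [a, FP]
  exact coeff_prod_one_add (Icc 1 (n+1)) (fun i => i) (fun i => 1/(i:ℝ)) n

/-- the finset of natural numbers underlying a nodup multiset of positive naturals -/
def pfinset (x : Multiset ℕ+) (hx : x.Nodup) : Finset ℕ :=
  ⟨x.map (fun i : ℕ+ => (i:ℕ)), Multiset.Nodup.map PNat.coe_injective hx⟩

lemma sum_pfinset (x : Multiset ℕ+) (hx : x.Nodup) :
    ∑ i ∈ pfinset x hx, i = partitionSize x := by
  rw [pfinset, Finset.sum_mk, Multiset.map_id', partitionSize]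

lemma inv_prod_cast (x : Multiset ℕ+) :
    (x.map (fun i : ℕ+ => 1/((i:ℕ):ℝ))).prod = 1/((partitionNorm x : ℕ) : ℝ) := by
  induction x using Multiset.induction_on with
  | empty => simp [partitionNorm]
  | cons a s ih =>
    have h1 : partitionNorm (a ::ₘ s) = (a:ℕ) * partitionNorm s := by
      rw [partitionNorm, partitionNorm, Multiset.map_cons, Multiset.prod_cons]
    rw [Multiset.map_cons, Multiset.prod_cons, ih, h1]
    push_cast
    rw [div_mul_div_comm, one_mul]

lemma prod_pfinset (x : Multiset ℕ+) (hx : x.Nodup) :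
    ∏ i ∈ pfinset x hx, (1/(i:ℝ)) = 1/((partitionNorm x : ℕ) : ℝ) := by
  rw [pfinset, Finset.prod_mk, Multiset.map_map, ← inv_prod_cast]
  rfl

lemma W_eq_a (n : ℕ) : WsizeStarStar n = a n := by
  classical
  set Dn : Finset (Finset ℕ) :=
    (Icc 1 (n+1)).powerset.filter (fun T => ∑ i ∈ T, i = n) with hDn
  have key : ∀ x : {m : Multiset ℕ+ // partitionSize m = n ∧ m.Nodup},
      pfinset x.1 x.2.2 ∈ Dn := by
    rintro ⟨x, hsz, hnd⟩
    rw [hDn, Finset.mem_filter, Finset.mem_powerset]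
    constructor
    · intro k hk
      have hk' : k ∈ x.map (fun i : ℕ+ => (i:ℕ)) := hk
      rw [Finset.mem_Icc]
      constructor
      · obtain ⟨i, _, rfl⟩ := Multiset.mem_map.mp hk'
        exact i.2
      · have hle : k ≤ (x.map (fun i : ℕ+ => (i:ℕ))).sum :=
          Multiset.single_le_sum (fun y _ => Nat.zero_le y) k hk'
        rw [← partitionSize, hsz] at hle
        omega
    · show ∑ i ∈ pfinset x hnd, i = n
      rw [sum_pfinset x hnd, hsz]
  let e : {m : Multiset ℕ+ // partitionSize m = n ∧ m.Nodup} → {T : Finset ℕ // T ∈ Dn} :=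
    fun x => ⟨pfinset x.1 x.2.2, key x⟩
  have hinj : Function.Injective e := by
    rintro ⟨x, hx⟩ ⟨y, hy⟩ h
    simp only [e, Subtype.mk.injEq] at h
    have hval : x.map (fun i : ℕ+ => (i:ℕ)) = y.map (fun i : ℕ+ => (i:ℕ)) :=
      congrArg Finset.val h
    exact Subtype.ext (Multiset.map_injective PNat.coe_injective hval)
  have hsurj : Function.Surjective e := by
    rintro ⟨⟨Tv, Tnd⟩, hT⟩
    rw [hDn, Finset.mem_filter, Finset.mem_powerset] at hT
    have hpos : ∀ k ∈ Tv, 0 < k := by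
      intro k hk
      have := hT.1 hk
      rw [Finset.mem_Icc] at this
      omega
    set m : Multiset ℕ+ := Tv.pmap (fun k hk => (⟨k, hk⟩ : ℕ+)) hpos with hm
    have hmap : m.map (fun i : ℕ+ => (i:ℕ)) = Tv := by
      rw [hm]; refine (Multiset.map_pmap ..).trans ?_
      exact (Multiset.pmap_eq_map _ (fun a => a) Tv hpos).trans (Multiset.map_id Tv)
    have hnd : m.Nodup := by
      refine Multiset.Nodup.pmap ?_ Tnd
      intro a ha b hb hab
      exact congrArg (fun i : ℕ+ => (i:ℕ)) hab
    have hsum : ∑ i ∈ (⟨Tv, Tnd⟩ : Finset ℕ), i = n := hT.2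
    have hsz : partitionSize m = n := by
      rw [partitionSize, hmap, ← hsum, Finset.sum_mk, Multiset.map_id']
    refine ⟨⟨m, hsz, hnd⟩, ?_⟩
    apply Subtype.ext
    apply Finset.val_inj.mp
    exact hmap
  let eqv := Equiv.ofBijective e ⟨hinj, hsurj⟩
  have heq : WsizeStarStar n
      = ∑' x : {m : Multiset ℕ+ // partitionSize m = n ∧ m.Nodup},
          (fun T : {T : Finset ℕ // T ∈ Dn} => ∏ i ∈ T.1, (1/(i:ℝ))) (eqv x) :=
    tsum_congr fun x => by
      show (1:ℝ)/((partitionNorm x.1 : ℕ) : ℝ) = ∏ i ∈ pfinset x.1 x.2.2, (1/(i:ℝ))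
      rw [prod_pfinset]
  rw [heq, Equiv.tsum_eq eqv (fun T : {T : Finset ℕ // T ∈ Dn} => ∏ i ∈ T.1, (1/(i:ℝ))),
    Finset.tsum_subtype Dn (fun T => ∏ i ∈ T, (1/(i:ℝ))), a_eq_sum n, hDn]



/-! ### The array of coefficients of `log((1-x)∏_{k≥2}(1+x^k/k))` -/

def Tpair (p : ℕ × ℕ) : ℝ :=
  if 2 ≤ p.1 ∧ 2 ≤ p.2 then (-1:ℝ)^(p.2+1) / ((p.2:ℝ) * (p.1:ℝ)^p.2) else 0

lemma Tpair_def (k j : ℕ) :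
    Tpair (k, j) = if 2 ≤ k ∧ 2 ≤ j then (-1:ℝ)^(j+1) / ((j:ℝ) * (k:ℝ)^j) else 0 := rfl

lemma Tpair_abs_le (p : ℕ × ℕ) :
    |Tpair p| ≤ (if 2 ≤ p.1 then 4/((p.1:ℝ))^2 else 0) * (1/2:ℝ)^p.2 := by
  obtain ⟨k, j⟩ := p
  by_cases h : 2 ≤ k ∧ 2 ≤ j
  · obtain ⟨i, rfl⟩ : ∃ i, j = i + 2 := ⟨j-2, by omega⟩
    rw [Tpair, if_pos h]
    simp only [if_pos h.1]
    have hk2 : (2:ℝ) ≤ (k:ℝ) := by exact_mod_cast h.1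
    have hkpos : (0:ℝ) < (k:ℝ) := by linarith
    have h2i : (2:ℝ)^i ≤ (k:ℝ)^i := pow_le_pow_left₀ (by norm_num) hk2 i
    have hjpos : (0:ℝ) < (((i:ℕ)+2:ℕ):ℝ) := by positivity
    have habs : |(-1:ℝ)^((i:ℕ)+2+1) / ((((i:ℕ)+2:ℕ):ℝ) * (k:ℝ)^((i:ℕ)+2))|
        = 1 / ((((i:ℕ)+2:ℕ):ℝ) * (k:ℝ)^((i:ℕ)+2)) := by
      rw [abs_div, abs_pow, abs_neg, abs_one, one_pow,
        abs_of_pos (by positivity)]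
    rw [habs]
    have key : (1:ℝ) / ((((i:ℕ)+2:ℕ):ℝ) * (k:ℝ)^(i+2)) ≤ 1/((k:ℝ)^2 * 2^i) := by
      apply one_div_le_one_div_of_le (by positivity)
      calc (k:ℝ)^2 * 2^i ≤ (k:ℝ)^2 * (k:ℝ)^i := by
            apply mul_le_mul_of_nonneg_left h2i (by positivity)
        _ = (k:ℝ)^(i+2) := by ring
        _ ≤ (((i:ℕ)+2:ℕ):ℝ) * (k:ℝ)^(i+2) := by
            apply le_mul_of_one_le_left (by positivity)
            push_cast
            linarith [Nat.cast_nonneg (α := ℝ) i]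
    refine key.trans (le_of_eq ?_)
    rw [div_pow, one_pow]
    rw [pow_add]
    field_simp
    ring
  · rw [Tpair_def, if_neg h, abs_zero]
    apply mul_nonneg
    · split_ifs
      · positivity
      · exact le_rfl
    · positivity

lemma Tpair_summable_abs : Summable (fun p : ℕ×ℕ => |Tpair p|) := by
  have hf : Summable (fun k : ℕ => if 2 ≤ k then 4/((k:ℝ))^2 else 0) := by
    refine Summable.of_nonneg_of_le (fun k => ?_) (fun k => ?_)
      (((Real.summable_one_div_nat_pow (p := 2)).mpr one_lt_two).mul_left 4)
    · split_ifs
      · positivity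
      · exact le_refl 0
    · split_ifs
      · rw [mul_one_div]
      · positivity
  have hg : Summable (fun j : ℕ => (1/2:ℝ)^j) :=
    summable_geometric_of_lt_one (by norm_num) (by norm_num)
  refine Summable.of_nonneg_of_le (fun p => abs_nonneg _) Tpair_abs_le ?_
  exact hf.mul_of_nonneg hg (fun k => by show (0:ℝ) ≤ (if 2 ≤ k then 4/((k:ℝ))^2 else 0); split_ifs <;> positivity)
    (fun j => by show (0:ℝ) ≤ (1/2:ℝ)^j; positivity)

lemma Tpair_summable : Summable Tpair := Summable.of_abs Tpair_summable_abs

lemma Tpair_row_hasSum {k : ℕ} (hk : 2 ≤ k) :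
    HasSum (fun j => Tpair (k, j)) (Real.log (1 + 1/(k:ℝ)) - 1/(k:ℝ)) := by
  have hk1 : (1:ℝ) < (k:ℝ) := by exact_mod_cast hk.trans_lt' one_lt_two
  have hkpos : (0:ℝ) < (k:ℝ) := by linarith
  have habs : |(-(1/(k:ℝ)))| < 1 := by
    rw [abs_neg, abs_of_nonneg (by positivity)]
    rw [div_lt_one hkpos]
    linarith
  have h0 := Real.hasSum_pow_div_log_of_abs_lt_one habs
  have h1 : HasSum (fun n : ℕ => -((-(1/(k:ℝ)))^(n+1)/((n:ℝ)+1)))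
      (Real.log (1 + 1/(k:ℝ))) := by
    have h0' := h0.neg
    rw [neg_neg, sub_neg_eq_add] at h0'
    exact h0'
  have hδ : HasSum (fun n : ℕ => if n = 0 then (1/(k:ℝ)) else 0) (1/(k:ℝ)) :=
    hasSum_ite_eq 0 _
  have h2 : HasSum (fun n => Tpair (k, n+1)) (Real.log (1 + 1/(k:ℝ)) - 1/(k:ℝ)) := by
    have h3 := h1.sub hδ
    have hfe : (fun n : ℕ => -((-(1/(k:ℝ)))^(n+1)/((n:ℝ)+1)) - (if n = 0 then (1/(k:ℝ)) else 0))
        = fun n => Tpair (k, n+1) := by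
      funext n
      cases n with
      | zero =>
        have hnc : ¬(2 ≤ k ∧ 2 ≤ 0 + 1) := by omega
        rw [Tpair_def, if_neg hnc, if_pos rfl]
        norm_num
      | succ m =>
        rw [Tpair_def, if_pos (⟨hk, by omega⟩ : 2 ≤ k ∧ 2 ≤ m + 1 + 1)]
        rw [if_neg (Nat.succ_ne_zero m), sub_zero, neg_pow]
        push_cast
        have hkne : (k:ℝ) ≠ 0 := by positivity
        have hm2 : ((m:ℝ)+1+1) ≠ 0 := by positivity
        field_simp
        rw [mul_assoc, ← mul_pow, one_div, inv_mul_cancel₀ hkne, one_pow, mul_one]; ring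
    rw [← hfe]; exact h3
  have h4 := (hasSum_nat_add_iff (f := fun j => Tpair (k, j)) 1).mp h2
  have h5 : ∑ i ∈ Finset.range 1, Tpair (k, i) = 0 := by
    rw [Finset.sum_range_one, Tpair_def, if_neg (by omega)]
  rw [h5, add_zero] at h4
  exact h4

def Fout (k : ℕ) : ℝ := if 2 ≤ k then Real.log (1 + 1/(k:ℝ)) - 1/(k:ℝ) else 0

lemma log_one_add_bounds {x : ℝ} (hx : 0 < x) :
    x - x^2 ≤ Real.log (1 + x) ∧ Real.log (1 + x) ≤ x := by
  have h1x : (0:ℝ) < 1 + x := by linarith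
  constructor
  · have h := Real.log_le_sub_one_of_pos (x := (1+x)⁻¹) (by positivity)
    rw [Real.log_inv] at h
    have h2 : 1 - (1+x)⁻¹ ≤ Real.log (1 + x) := by linarith
    have h3 : x - x^2 ≤ 1 - (1+x)⁻¹ := by
      have e : 1 - (1+x)⁻¹ = x/(1+x) := by field_simp; ring
      rw [e, le_div_iff₀ h1x]
      nlinarith
    linarith
  · have h := Real.log_le_sub_one_of_pos h1x
    linarith

lemma Fout_bound (k : ℕ) : |Fout k| ≤ 1/(k:ℝ)^2 := by
  rw [Fout]
  split_ifs with h
  · have hkR : (2:ℝ) ≤ (k:ℝ) := by exact_mod_cast h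
    have hx : (0:ℝ) < 1/(k:ℝ) := by positivity
    obtain ⟨hlo, hhi⟩ := log_one_add_bounds hx
    rw [abs_of_nonpos (by linarith)]
    rw [neg_sub]
    have : (1/(k:ℝ))^2 = 1/(k:ℝ)^2 := by rw [div_pow, one_pow]
    linarith [this ▸ hlo]
  · rw [abs_zero]
    positivity

lemma Fout_summable : Summable Fout :=
  Summable.of_abs (Summable.of_nonneg_of_le (fun _ => abs_nonneg _) Fout_bound
    ((Real.summable_one_div_nat_pow (p := 2)).mpr one_lt_two))

lemma Fout_psum (K : ℕ) :
    ∑ k ∈ Finset.range (K+2), Fout k = 1 - Real.log 2 - Real.eulerMascheroniSeq (K+1) := by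
  induction K with
  | zero =>
    rw [Finset.sum_range_succ, Finset.sum_range_one]
    rw [Fout, Fout, if_neg (by omega), if_neg (by omega)]
    rw [Real.eulerMascheroniSeq]
    norm_num [harmonic_succ]
  | succ K ih =>
    rw [Finset.sum_range_succ, ih]
    have h2K : 2 ≤ K + 2 := by omega
    rw [Fout, if_pos h2K]
    rw [Real.eulerMascheroniSeq, Real.eulerMascheroniSeq]
    have hcast : ((K+2:ℕ):ℝ) = (K:ℝ) + 2 := by push_cast; ring
    have hpos : (0:ℝ) < (K:ℝ) + 2 := by positivity
    have hlog : Real.log (1 + 1/((K+2:ℕ):ℝ)) = Real.log ((K:ℝ)+3) - Real.log ((K:ℝ)+2) := by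
      rw [hcast]
      have : 1 + 1/((K:ℝ)+2) = ((K:ℝ)+3)/((K:ℝ)+2) := by field_simp; ring
      rw [this, Real.log_div (by positivity) (by positivity)]
    have hharm : (harmonic (K+1+1) : ℝ) = (harmonic (K+1) : ℝ) + 1/((K:ℝ)+2) := by
      rw [harmonic_succ]
      push_cast
      ring
    rw [hlog, hharm, hcast]
    have e : ((K:ℝ)+2+1) = (K:ℝ)+3 := by ring
    rw [e]
    push_cast
    ring

lemma Fout_hasSum :
    HasSum Fout (1 - Real.log 2 - Real.eulerMascheroniConstant) := by
  have h1 := Fout_summable.hasSum.tendsto_sum_nat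
  have h1' : Tendsto (fun K => ∑ k ∈ Finset.range (K+2), Fout k) atTop (nhds (∑' k, Fout k)) :=
    (tendsto_add_atTop_iff_nat 2).mpr h1
  have h2 : Tendsto (fun K => ∑ k ∈ Finset.range (K+2), Fout k) atTop
      (nhds (1 - Real.log 2 - Real.eulerMascheroniConstant)) := by
    simp_rw [Fout_psum]
    exact (tendsto_const_nhds.sub
      (Real.tendsto_eulerMascheroniSeq.comp (tendsto_add_atTop_nat 1)))
  have := tendsto_nhds_unique h1' h2
  rw [← this]
  exact Fout_summable.hasSum

lemma tsum_Tpair : ∑' p : ℕ × ℕ, Tpair p = 1 - Real.log 2 - Real.eulerMascheroniConstant := by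
  have hrow : ∀ k : ℕ, Summable fun j => Tpair (k, j) := by
    intro k
    rcases le_or_gt 2 k with h | h
    · exact (Tpair_row_hasSum h).summable
    · exact summable_zero.congr fun j => by
        rw [Tpair_def, if_neg (by omega)]
  rw [Summable.tsum_prod' Tpair_summable hrow]
  have hcol : ∀ k : ℕ, ∑' j, Tpair (k, j) = Fout k := by
    intro k
    rcases le_or_gt 2 k with h | h
    · rw [(Tpair_row_hasSum h).tsum_eq, Fout, if_pos h]
    · rw [Fout, if_neg (by omega)]
      have hz : ∀ j, Tpair (k, j) = 0 := fun j => by rw [Tpair_def, if_neg (by omega)]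
      exact (tsum_congr hz).trans tsum_zero
  rw [tsum_congr hcol]
  exact Fout_hasSum.tsum_eq

lemma Hc_zero : Hc 0 = 0 := rfl

lemma Hc_one : Hc 1 = -1 := by
  rw [Hc, if_neg one_ne_zero, Wgen]
  rw [show (1:ℕ) - 1 = 0 from rfl]
  rw [Finset.Icc_eq_empty (by omega), Finset.sum_empty]
  norm_num

lemma Hc_dA (r : ℕ) : Hc (r+2) = ∑ p ∈ (r+2).divisorsAntidiagonal, Tpair p := by
  have hm0 : (r+2) ≠ 0 := by omega
  -- left side
  have hL : Hc (r+2) = (-1 + ∑ k ∈ Finset.Icc 2 (r+2), vco k (r+1)) / ((r+2:ℕ):ℝ) := by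
    rw [Hc, if_neg hm0, Wgen]
    rfl
  -- divisors versions
  set D2 : Finset ℕ := ((r+2).divisors).erase 1 with hD2
  have hsub : D2 ⊆ Finset.Icc 2 (r+2) := by
    intro k hk
    rw [hD2, Finset.mem_erase, Nat.mem_divisors] at hk
    have hk1 : 1 ≤ k := Nat.pos_of_ne_zero (by
      rintro rfl
      exact hm0 (Nat.eq_zero_of_zero_dvd hk.2.1))
    have hk2 : k ≤ r+2 := Nat.le_of_dvd (by omega) hk.2.1
    rw [Finset.mem_Icc]
    omega
  have hstep1 : ∑ k ∈ Finset.Icc 2 (r+2), vco k (r+1) = ∑ k ∈ D2, vco k (r+1) := by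
    refine (Finset.sum_subset hsub fun k hk hk' => ?_).symm
    rw [Finset.mem_Icc] at hk
    rw [hD2, Finset.mem_erase, Nat.mem_divisors] at hk'
    have hnd : ¬ k ∣ (r+2) := by
      intro hd
      exact hk' ⟨by omega, hd, hm0⟩
    exact vco_of_not_dvd hnd
  have hmem : (r+2) ∈ D2 := by
    rw [hD2, Finset.mem_erase, Nat.mem_divisors]
    exact ⟨by omega, dvd_rfl, hm0⟩
  have hvcotop : vco (r+2) (r+1) = 1 := by
    rw [vco_of_eq hm0 (j := 1) (by omega)]
    norm_num
  have hstep2 : ∑ k ∈ D2, vco k (r+1) = 1 + ∑ k ∈ D2.erase (r+2), vco k (r+1) := by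
    rw [← Finset.sum_erase_add D2 _ hmem, hvcotop]
    ring
  -- right side
  have hR : ∑ p ∈ (r+2).divisorsAntidiagonal, Tpair p
      = ∑ k ∈ D2.erase (r+2), Tpair (k, (r+2)/k) := by
    rw [show (∑ p ∈ (r+2).divisorsAntidiagonal, Tpair p)
        = ∑ p ∈ (r+2).divisorsAntidiagonal, Tpair (p.1, p.2) from
      Finset.sum_congr rfl (fun p _ => rfl)]
    rw [Nat.sum_divisorsAntidiagonal (fun i j => Tpair (i, j))]
    rw [hD2]
    rw [Finset.sum_erase _ (by
      rw [Tpair_def (r+2) ((r+2)/(r+2)), Nat.div_self (by omega)]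
      rw [if_neg (by omega)]),
      Finset.sum_erase _ (by
      rw [Tpair_def 1 ((r+2)/1)]
      rw [if_neg (by omega)])]
  -- termwise
  have hterm : ∀ k ∈ D2.erase (r+2), vco k (r+1) / ((r+2:ℕ):ℝ) = Tpair (k, (r+2)/k) := by
    intro k hk
    rw [Finset.mem_erase] at hk
    obtain ⟨hkne, hk⟩ := hk
    rw [hD2, Finset.mem_erase, Nat.mem_divisors] at hk
    obtain ⟨hk1, hkd, -⟩ := hk
    have hkpos : 0 < k := Nat.pos_of_ne_zero (by
      rintro rfl
      exact hm0 (Nat.eq_zero_of_zero_dvd hkd))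
    have hk2 : 2 ≤ k := by omega
    set j := (r+2)/k with hj
    have hjk : j * k = r + 2 := Nat.div_mul_cancel hkd
    clear_value j
    have hj0 : j ≠ 0 := by
      rintro rfl
      rw [zero_mul] at hjk
      omega
    have hj1 : j ≠ 1 := by
      rintro rfl
      rw [one_mul] at hjk
      exact hkne hjk
    have hj2 : 2 ≤ j := by omega
    rw [vco_of_eq (by omega) (show r+1+1 = j * k from by omega)]
    rw [Tpair_def, if_pos ⟨hk2, hj2⟩]
    have hcast : ((r+2:ℕ):ℝ) = (j:ℝ) * (k:ℝ) := by
      rw [← hjk]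
      push_cast
      ring
    rw [hcast]
    obtain ⟨i, rfl⟩ : ∃ i, j = i + 2 := ⟨j - 2, by omega⟩
    have e1 : i + 2 + 1 = i + 3 := by omega
    have e2 : i + 2 - 1 = i + 1 := by omega
    rw [e1, e2]
    have hkR : (0:ℝ) < (k:ℝ) := by exact_mod_cast hkpos
    have hjR : (0:ℝ) < ((i+2:ℕ):ℝ) := by positivity
    rw [div_pow, one_pow]
    push_cast
    field_simp
    ring
  rw [hL, hstep1, hstep2, hR]
  have : (-1 + (1 + ∑ k ∈ D2.erase (r+2), vco k (r+1))) = ∑ k ∈ D2.erase (r+2), vco k (r+1) := by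
    ring
  rw [this, Finset.sum_div]
  exact Finset.sum_congr rfl hterm

/-- `Hc` decomposes as a Dirac at 1 plus divisor sums of `Tpair`. -/
lemma Hc_pointwise (m : ℕ) :
    Hc m = (if m = 1 then (-1:ℝ) else 0) + ∑ p ∈ m.divisorsAntidiagonal, Tpair p := by
  match m with
  | 0 => rw [Hc_zero, Nat.divisorsAntidiagonal_zero]; norm_num
  | 1 =>
    rw [Hc_one, Nat.divisorsAntidiagonal_one, if_pos rfl, Finset.sum_singleton,
      Tpair_def, if_neg (by omega)]
    norm_num
  | (r+2) =>
    rw [Hc_dA r, if_neg (by omega), zero_add]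

lemma dA_pairwise_disjoint (M : ℕ) : (↑(Finset.range M) : Set ℕ).PairwiseDisjoint
    Nat.divisorsAntidiagonal := by
  intro m _ m' _ hne
  show Disjoint (Nat.divisorsAntidiagonal m) (Nat.divisorsAntidiagonal m')
  rw [Finset.disjoint_left]
  intro p hp hp'
  rw [Nat.mem_divisorsAntidiagonal] at hp hp'
  exact hne (hp.1.symm.trans hp'.1)

lemma sum_range_dA (f : ℕ × ℕ → ℝ) (M : ℕ) :
    ∑ m ∈ Finset.range M, ∑ p ∈ m.divisorsAntidiagonal, f p
      = ∑ p ∈ (Finset.range M).biUnion Nat.divisorsAntidiagonal, f p :=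
  (Finset.sum_biUnion (dA_pairwise_disjoint M)).symm

lemma Hc_abs_le (m : ℕ) : |Hc m| ≤ (if m = 1 then (1:ℝ) else 0)
    + ∑ p ∈ m.divisorsAntidiagonal, |Tpair p| := by
  rw [Hc_pointwise]
  refine (abs_add_le _ _).trans (add_le_add ?_ (Finset.abs_sum_le_sum_abs _ _))
  split_ifs
  · rw [abs_neg, abs_one]
  · rw [abs_zero]

lemma HB_summable : Summable (fun m => (if m = 1 then (1:ℝ) else 0)
    + ∑ p ∈ m.divisorsAntidiagonal, |Tpair p|) := by
  refine Summable.add ((hasSum_ite_eq 1 (1:ℝ)).summable) ?_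
  refine summable_of_sum_range_le (c := ∑' p : ℕ × ℕ, |Tpair p|)
    (fun m => Finset.sum_nonneg fun p _ => abs_nonneg _) (fun M => ?_)
  rw [sum_range_dA]
  exact Summable.sum_le_tsum _ (fun p _ => abs_nonneg _) Tpair_summable_abs

lemma Hc_summable : Summable Hc :=
  Summable.of_abs (Summable.of_nonneg_of_le (fun _ => abs_nonneg _) Hc_abs_le HB_summable)

/-- Exhausting finsets of pairs. -/
def SS (M : ℕ) : Finset (ℕ × ℕ) :=
  ((Finset.range M).biUnion Nat.divisorsAntidiagonal ∪ {0} ×ˢ Finset.range M)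
    ∪ Finset.range M ×ˢ {0}

lemma SS_mono : Monotone SS := by
  intro M M' h
  refine Finset.union_subset_union (Finset.union_subset_union ?_ ?_) ?_
  · exact Finset.biUnion_subset_biUnion_of_subset_left _ (Finset.range_subset_range.mpr h)
  · exact Finset.product_subset_product (le_refl _) (Finset.range_subset_range.mpr h)
  · exact Finset.product_subset_product (Finset.range_subset_range.mpr h) (le_refl _)

lemma SS_exhausts (p : ℕ × ℕ) : ∃ M, p ∈ SS M := by
  obtain ⟨k, j⟩ := p
  refine ⟨k * j + k + j + 1, ?_⟩
  rw [SS, Finset.mem_union, Finset.mem_union]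
  rcases eq_or_ne k 0 with rfl | hk
  · refine Or.inl (Or.inr ?_)
    rw [Finset.mem_product, Finset.mem_singleton, Finset.mem_range]
    exact ⟨rfl, by omega⟩
  rcases eq_or_ne j 0 with rfl | hj
  · refine Or.inr ?_
    rw [Finset.mem_product, Finset.mem_singleton, Finset.mem_range]
    exact ⟨by omega, rfl⟩
  refine Or.inl (Or.inl ?_)
  rw [Finset.mem_biUnion]
  exact ⟨k * j, by rw [Finset.mem_range]; omega,
    by rw [Nat.mem_divisorsAntidiagonal]; exact ⟨rfl, by positivity⟩⟩

lemma sum_SS (M : ℕ) :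
    ∑ p ∈ SS M, Tpair p = ∑ p ∈ (Finset.range M).biUnion Nat.divisorsAntidiagonal, Tpair p := by
  refine (Finset.sum_subset ?_ fun p hp hp' => ?_).symm
  · rw [SS]
    exact (Finset.subset_union_left).trans Finset.subset_union_left
  · rw [SS, Finset.mem_union, Finset.mem_union] at hp
    have hz : p.1 = 0 ∨ p.2 = 0 := by
      rcases hp with (h | h) | h
      · exact absurd h hp'
      · rw [Finset.mem_product, Finset.mem_singleton] at h
        exact Or.inl h.1
      · rw [Finset.mem_product, Finset.mem_singleton] at h
        exact Or.inr h.2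
    obtain ⟨k, j⟩ := p
    rw [Tpair_def, if_neg (by simp at hz; omega)]

lemma Hc_psum (M : ℕ) (hM : 2 ≤ M) :
    ∑ m ∈ Finset.range M, Hc m = -1 + ∑ p ∈ SS M, Tpair p := by
  have h1 : ∑ m ∈ Finset.range M, Hc m
      = ∑ m ∈ Finset.range M, ((if m = 1 then (-1:ℝ) else 0)
          + ∑ p ∈ m.divisorsAntidiagonal, Tpair p) :=
    Finset.sum_congr rfl fun m _ => Hc_pointwise m
  rw [h1, Finset.sum_add_distrib, sum_range_dA, ← sum_SS]
  congr 1
  rw [Finset.sum_ite_eq' (Finset.range M) 1 (fun _ => (-1:ℝ))]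
  rw [if_pos (Finset.mem_range.mpr (by omega))]

lemma tsum_Hc : ∑' m, Hc m = -Real.log 2 - Real.eulerMascheroniConstant := by
  have h1 : Tendsto (fun M => ∑ m ∈ Finset.range M, Hc m) atTop (nhds (∑' m, Hc m)) :=
    Hc_summable.hasSum.tendsto_sum_nat
  have hSS : Tendsto SS atTop atTop := tendsto_atTop_finset_of_monotone SS_mono SS_exhausts
  have h2 : Tendsto (fun M => ∑ p ∈ SS M, Tpair p) atTop (nhds (∑' p : ℕ × ℕ, Tpair p)) :=
    Tpair_summable.hasSum.comp hSS
  have h3 : Tendsto (fun M => ∑ m ∈ Finset.range M, Hc m) atTop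
      (nhds (-1 + ∑' p : ℕ × ℕ, Tpair p)) := by
    refine (tendsto_const_nhds.add h2).congr' ?_
    filter_upwards [eventually_ge_atTop 2] with M hM
    exact (Hc_psum M hM).symm
  have := tendsto_nhds_unique h1 h3
  rw [this, tsum_Tpair]
  ring

/-! ### Coefficients of `exp H` are absolutely summable with total `exp (∑ Hc)` -/

lemma Hc_summable_abs : Summable (fun n => ‖Hc n‖) := by
  have : Summable (fun n => |Hc n|) :=
    Summable.of_nonneg_of_le (fun _ => abs_nonneg _) Hc_abs_le HB_summable
  exact this.congr fun n => (Real.norm_eq_abs _).symm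

def cm (m n : ℕ) : ℝ := coeff n (HP ^ m)

lemma cm_succ (m n : ℕ) : cm (m+1) n = ∑ k ∈ range (n+1), Hc k * cm m (n - k) := by
  have h1 : cm (m+1) n = ∑ p ∈ antidiagonal n, Hc p.1 * cm m p.2 := by
    rw [cm, pow_succ', coeff_mul]
    exact Finset.sum_congr rfl fun p _ => by rw [HP, coeff_mk]; rfl
  rw [h1, Nat.sum_antidiagonal_eq_sum_range_succ_mk]

lemma cm_package (m : ℕ) :
    Summable (fun n => ‖cm m n‖) ∧ HasSum (cm m) ((∑' n, Hc n)^m) ∧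
      (∑' n, ‖cm m n‖) ≤ (∑' n, ‖Hc n‖)^m := by
  induction m with
  | zero =>
    have h0 : cm 0 = fun n => if n = 0 then (1:ℝ) else 0 :=
      funext fun n => by rw [cm, pow_zero, coeff_one]
    have hn0 : (fun n => ‖cm 0 n‖) = fun n => if n = 0 then (1:ℝ) else 0 := by
      rw [h0]
      funext n
      rcases eq_or_ne n 0 with rfl | h
      · simp
      · simp [h]
    refine ⟨?_, ?_, ?_⟩
    · rw [hn0]
      exact (hasSum_ite_eq 0 1).summable
    · rw [h0, pow_zero]
      exact hasSum_ite_eq 0 1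
    · rw [hn0, tsum_ite_eq, pow_zero]
  | succ m ih =>
    obtain ⟨ihS, ihH, ihB⟩ := ih
    have hfe : cm (m+1) = fun n => ∑ k ∈ range (n+1), Hc k * cm m (n - k) :=
      funext (cm_succ m)
    refine ⟨?_, ?_, ?_⟩
    · exact (summable_norm_sum_mul_range_of_summable_norm Hc_summable_abs ihS).congr
        fun n => congrArg norm (cm_succ m n).symm
    · have h := hasSum_sum_range_mul_of_summable_norm Hc_summable_abs ihS
      rw [ihH.tsum_eq, ← hfe, ← pow_succ'] at h
      exact h
    · have hpt : ∀ n, ‖cm (m+1) n‖ ≤ ∑ k ∈ range (n+1), ‖Hc k‖ * ‖cm m (n-k)‖ := fun n => by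
        rw [cm_succ]
        exact (norm_sum_le _ _).trans
          (le_of_eq (Finset.sum_congr rfl fun k _ => norm_mul _ _))
      have hnn1 : Summable (fun n => ‖(‖Hc n‖)‖) := by
        simpa only [norm_norm] using Hc_summable_abs
      have hnn2 : Summable (fun n => ‖(‖cm m n‖)‖) := by
        simpa only [norm_norm] using ihS
      have hmaj := hasSum_sum_range_mul_of_summable_norm hnn1 hnn2
      have hS1 := (summable_norm_sum_mul_range_of_summable_norm Hc_summable_abs ihS).congr
        (fun n => congrArg norm (cm_succ m n).symm)
      calc ∑' n, ‖cm (m+1) n‖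
          ≤ ∑' n, ∑ k ∈ range (n+1), ‖Hc k‖ * ‖cm m (n-k)‖ :=
            Summable.tsum_le_tsum hpt hS1 hmaj.summable
        _ = (∑' n, ‖Hc n‖) * (∑' n, ‖cm m n‖) := hmaj.tsum_eq
        _ ≤ (∑' n, ‖Hc n‖) * (∑' n, ‖Hc n‖)^m := by
            apply mul_le_mul_of_nonneg_left ihB (tsum_nonneg fun n => norm_nonneg _)
        _ = (∑' n, ‖Hc n‖)^(m+1) := (pow_succ' _ _).symm

def Fexp : ℕ × ℕ → ℝ := fun p => cm p.1 p.2 / (p.1.factorial : ℝ)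

lemma E_row (n : ℕ) : HasSum (fun m => Fexp (m, n)) (E n) := by
  have hvan : ∀ m ∉ range (n+1), Fexp (m, n) = 0 := by
    intro m hm
    rw [Finset.mem_range, not_lt] at hm
    have : cm m n = 0 := coeff_HP_pow_eq_zero (by omega)
    rw [Fexp]
    simp only [this, zero_div]
  have h : HasSum (fun m => Fexp (m, n)) _ := hasSum_sum_of_ne_finset_zero hvan
  have : ∑ m ∈ range (n+1), Fexp (m, n) = E n := by
    rw [E]
    exact Finset.sum_congr rfl fun m _ => rfl
  rwa [this] at h

lemma Fexp_norm_summable : Summable (fun p => ‖Fexp p‖) := by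
  rw [summable_prod_of_nonneg (fun p => norm_nonneg _)]
  have hrow : ∀ m, (fun n => ‖Fexp (m, n)‖) = fun n => ‖cm m n‖ / (m.factorial:ℝ) := by
    intro m
    funext n
    rw [Fexp, norm_div, Real.norm_natCast]
  constructor
  · intro m
    rw [hrow m]
    exact (cm_package m).1.div_const _
  · refine Summable.of_nonneg_of_le (fun m => tsum_nonneg fun n => norm_nonneg _)
      (fun m => ?_) (Real.summable_pow_div_factorial (∑' n, ‖Hc n‖))
    rw [hrow m, tsum_div_const]
    gcongr
    exact (cm_package m).2.2

lemma Fexp_summable : Summable Fexp := Fexp_norm_summable.of_norm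

lemma hasSum_E : HasSum E (∑' p : ℕ × ℕ, Fexp p) := by
  have h := Fexp_summable.hasSum
  have hswap : HasSum (fun p : ℕ × ℕ => Fexp (p.2, p.1)) (∑' p : ℕ × ℕ, Fexp p) :=
    (Equiv.prodComm ℕ ℕ).hasSum_iff.mpr h
  exact hswap.prod_fiberwise (fun n => E_row n)

lemma tsum_Fexp : ∑' p : ℕ × ℕ, Fexp p = Real.exp (∑' n, Hc n) := by
  have hrowS : ∀ m : ℕ, Summable (fun n => Fexp (m, n)) := by
    intro m
    have := ((cm_package m).2.1.summable).div_const (m.factorial : ℝ)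
    exact this.congr fun n => rfl
  rw [Summable.tsum_prod' Fexp_summable hrowS]
  have hrow : ∀ m, ∑' n, Fexp (m, n) = (∑' n, Hc n)^m / (m.factorial : ℝ) := by
    intro m
    rw [show (fun n => Fexp (m, n)) = fun n => cm m n / (m.factorial:ℝ) from rfl]
    rw [tsum_div_const, (cm_package m).2.1.tsum_eq]
  rw [tsum_congr hrow, Real.exp_eq_exp_ℝ, NormedSpace.exp_eq_tsum_div]

lemma hE_value : HasSum E (Real.exp (-Real.eulerMascheroniConstant) / 2) := by
  have h := hasSum_E
  rw [tsum_Fexp, tsum_Hc] at h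
  have : Real.exp (-Real.log 2 - Real.eulerMascheroniConstant)
      = Real.exp (-Real.eulerMascheroniConstant) / 2 := by
    rw [show -Real.log 2 - Real.eulerMascheroniConstant
        = -Real.eulerMascheroniConstant - Real.log 2 from by ring]
    rw [Real.exp_sub, Real.exp_log two_pos]
  rwa [this] at h

end LehmerAux

end

theorem lehmer_reciprocal_norm_size_distinct_parts :
    Tendsto (fun n : ℕ => WsizeStarStar n) atTop
      (nhds (Real.exp (-Real.eulerMascheroniConstant))) := by
  open LehmerAux in
  have hb : Tendsto LehmerAux.b atTop (nhds (Real.exp (-Real.eulerMascheroniConstant) / 2)) := by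
    have h1 := LehmerAux.hE_value.tendsto_sum_nat
    have h2 : Tendsto (fun n => ∑ m ∈ Finset.range (n+1), LehmerAux.E m) atTop
        (nhds (Real.exp (-Real.eulerMascheroniConstant) / 2)) :=
      (tendsto_add_atTop_iff_nat 1).mpr h1
    exact h2.congr (fun n => (LehmerAux.b_eq_sum_E n).symm)
  have h3 : Tendsto (fun n => LehmerAux.a (n+1)) atTop
      (nhds (Real.exp (-Real.eulerMascheroniConstant))) := by
    have h4 : Tendsto (fun n => LehmerAux.b (n+1) + LehmerAux.b n) atTop
        (nhds (Real.exp (-Real.eulerMascheroniConstant) / 2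
          + Real.exp (-Real.eulerMascheroniConstant) / 2)) :=
      ((tendsto_add_atTop_iff_nat 1).mpr hb).add hb
    rw [show Real.exp (-Real.eulerMascheroniConstant) / 2
        + Real.exp (-Real.eulerMascheroniConstant) / 2
        = Real.exp (-Real.eulerMascheroniConstant) from by ring] at h4
    exact h4.congr (fun n => (LehmerAux.a_succ n).symm)
  have h5 : Tendsto LehmerAux.a atTop (nhds (Real.exp (-Real.eulerMascheroniConstant))) :=
    (tendsto_add_atTop_iff_nat 1).mp h3
  exact h5.congr (fun n => (LehmerAux.W_eq_a n).symm)
end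

section
/- For every n ≥ 2, the sum of the reciprocals of the natural logarithms of the first n primes satisfies ∑_{j=1}^n 1/(log p_j) ≤ 3n/(log n). -/
/-- `p k`: the `k`-th prime number in increasing order (`1`-indexed), so
`nthPrime 1 = 2`, `nthPrime 2 = 3`, `nthPrime 3 = 5`, etc. -/
noncomputable def nthPrime (k : ℕ) : ℕ := Nat.nth Nat.Prime (k - 1)

lemma two_le_nthPrime (j : ℕ) : 2 ≤ nthPrime j :=
  (Nat.prime_nth_prime _).two_le

lemma succ_le_nthPrime {j : ℕ} (hj : 1 ≤ j) : j + 1 ≤ nthPrime j := by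
  have := Nat.add_two_le_nth_prime (j - 1)
  unfold nthPrime
  omega

lemma log_nthPrime_pos (j : ℕ) : 0 < Real.log (nthPrime j) := by
  apply Real.log_pos
  exact_mod_cast (two_le_nthPrime j).trans_lt' one_lt_two

lemma log_two_le_log_nthPrime (j : ℕ) : Real.log 2 ≤ Real.log (nthPrime j) := by
  apply Real.log_le_log (by norm_num)
  exact_mod_cast two_le_nthPrime j

set_option maxHeartbeats 1600000 in
theorem sum_reciprocal_log_prime_bound :
    ∀ n : ℕ, 2 ≤ n →
      ∑ j ∈ Finset.Icc 1 n, 1 / Real.log (nthPrime j) ≤ 3 * n / Real.log n := by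
  intro n hn
  have hn1 : (1 : ℝ) < n := by exact_mod_cast hn.trans_lt' one_lt_two
  have hL : 0 < Real.log n := Real.log_pos hn1
  have hl2 : 0 < Real.log 2 := Real.log_pos one_lt_two
  have hn0 : (0 : ℝ) ≤ n := by positivity
  by_cases h8 : n ≤ 8
  · -- small case: each term ≤ 1/log 2, and log n ≤ 3 log 2
    have hsum : ∑ j ∈ Finset.Icc 1 n, 1 / Real.log (nthPrime j)
        ≤ ∑ j ∈ Finset.Icc 1 n, 1 / Real.log 2 := by
      apply Finset.sum_le_sum
      intro j _
      exact one_div_le_one_div_of_le hl2 (log_two_le_log_nthPrime j)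
    rw [Finset.sum_const, Nat.card_Icc] at hsum
    simp only [Nat.add_sub_cancel, nsmul_eq_mul] at hsum
    refine hsum.trans ?_
    have hlog8 : Real.log n ≤ 3 * Real.log 2 := by
      have h1 : Real.log n ≤ Real.log 8 := by
        apply Real.log_le_log (by positivity)
        exact_mod_cast h8
      have h2 : Real.log 8 = 3 * Real.log 2 := by
        rw [show (8 : ℝ) = 2 ^ 3 by norm_num, Real.log_pow]
        push_cast; ring
      linarith
    rw [mul_one_div, div_le_div_iff₀ hl2 hL]
    nlinarith
  · -- large case: n ≥ 9, split at m = Nat.sqrt n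
    push_neg at h8
    have hn9 : 9 ≤ n := h8
    set m := Nat.sqrt n with hm
    have hm3 : 3 ≤ m := by
      have h1 : Nat.sqrt 9 ≤ Nat.sqrt n := Nat.sqrt_le_sqrt hn9
      have h2 : Nat.sqrt 9 = 3 := by norm_num
      omega
    have hmn : m ≤ n := Nat.sqrt_le_self n
    -- split sum
    have hsplit : ∑ j ∈ Finset.Icc 1 n, 1 / Real.log (nthPrime j)
        = (∑ j ∈ Finset.Ioc 0 m, 1 / Real.log (nthPrime j))
          + ∑ j ∈ Finset.Ioc m n, 1 / Real.log (nthPrime j) := by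
      rw [Finset.sum_Ioc_consecutive _ (Nat.zero_le m) hmn, ← Finset.Icc_add_one_left_eq_Ioc]; rfl
    rw [hsplit]
    -- head bound
    have hhead : ∑ j ∈ Finset.Ioc 0 m, 1 / Real.log (nthPrime j) ≤ m / Real.log 2 := by
      have h1 : ∑ j ∈ Finset.Ioc 0 m, 1 / Real.log (nthPrime j)
          ≤ ∑ j ∈ Finset.Ioc 0 m, 1 / Real.log 2 :=
        Finset.sum_le_sum fun j _ => one_div_le_one_div_of_le hl2 (log_two_le_log_nthPrime j)
      rw [Finset.sum_const, Nat.card_Ioc, nsmul_eq_mul] at h1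
      simpa [div_eq_mul_inv] using h1
    -- tail bound: for j > m, log (nthPrime j) ≥ (log n)/2
    have htail : ∑ j ∈ Finset.Ioc m n, 1 / Real.log (nthPrime j)
        ≤ ((n : ℝ) - m) * (2 / Real.log n) := by
      have hbound : ∀ j ∈ Finset.Ioc m n, 1 / Real.log (nthPrime j) ≤ 2 / Real.log n := by
        intro j hj
        rw [Finset.mem_Ioc] at hj
        have hj1 : 1 ≤ j := by omega
        have hp : j + 1 ≤ nthPrime j := succ_le_nthPrime hj1
        have hsq : n < (nthPrime j) ^ 2 := by
          have h1 : n < (m + 1) * (m + 1) := Nat.lt_succ_sqrt n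
          have h2 : m + 1 ≤ nthPrime j := by omega
          calc n < (m + 1) * (m + 1) := h1
            _ ≤ nthPrime j * nthPrime j := Nat.mul_le_mul h2 h2
            _ = nthPrime j ^ 2 := (sq _).symm
        have hlog : Real.log n ≤ 2 * Real.log (nthPrime j) := by
          have h1 : Real.log n ≤ Real.log ((nthPrime j : ℝ) ^ 2) := by
            apply Real.log_le_log (by positivity)
            exact_mod_cast hsq.le
          rwa [Real.log_pow, Nat.cast_ofNat] at h1
        rw [div_le_div_iff₀ (log_nthPrime_pos j) hL, one_mul]
        linarith
      calc ∑ j ∈ Finset.Ioc m n, 1 / Real.log (nthPrime j)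
          ≤ ∑ j ∈ Finset.Ioc m n, 2 / Real.log n := Finset.sum_le_sum hbound
        _ = ((n - m : ℕ) : ℝ) * (2 / Real.log n) := by
            rw [Finset.sum_const, Nat.card_Ioc, nsmul_eq_mul]
        _ = ((n : ℝ) - m) * (2 / Real.log n) := by rw [Nat.cast_sub hmn]
    -- combine
    have key : (m : ℝ) / Real.log 2 + ((n : ℝ) - m) * (2 / Real.log n)
        ≤ 3 * n / Real.log n := by
      obtain ⟨t, ht0, ht2⟩ : ∃ t : ℝ, 0 < t ∧ t ^ 2 = Real.sqrt n :=
        ⟨Real.sqrt (Real.sqrt n), Real.sqrt_pos.2 (Real.sqrt_pos.2 (by positivity)),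
          Real.sq_sqrt (Real.sqrt_nonneg _)⟩
      have ht4 : t ^ 4 = (n : ℝ) := by
        have h1 := Real.sq_sqrt (le_of_lt (show (0:ℝ) < n by positivity))
        nlinarith [ht2]
      have hmt : (m : ℝ) ≤ t ^ 2 := by
        rw [ht2]
        rw [show (m : ℝ) = Real.sqrt ((m : ℝ)^2) by rw [Real.sqrt_sq (by positivity)]]
        apply Real.sqrt_le_sqrt
        exact_mod_cast Nat.sqrt_le' n
      have htm : t ^ 2 ≤ (m : ℝ) + 1 := by
        rw [ht2]
        rw [show (m : ℝ) + 1 = Real.sqrt (((m : ℝ) + 1)^2) by rw [Real.sqrt_sq (by positivity)]]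
        apply Real.sqrt_le_sqrt
        have h1 : (n : ℝ) < ((m : ℝ) + 1) * ((m : ℝ) + 1) := by
          exact_mod_cast Nat.lt_succ_sqrt n
        nlinarith
      have ht3 : (3 : ℝ) ≤ t ^ 2 := by
        rw [ht2]
        rw [show (3 : ℝ) = Real.sqrt 9 by
          rw [show (9:ℝ) = 3^2 by norm_num, Real.sqrt_sq]; norm_num]
        exact Real.sqrt_le_sqrt (by exact_mod_cast hn9)
      have ht17 : (1.7 : ℝ) ≤ t := by nlinarith
      -- log n = 4 log t and e * log t ≤ t
      have hlt : Real.log n = 4 * Real.log t := by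
        rw [← ht4, Real.log_pow]; push_cast; ring
      have he : (2.7182818283 : ℝ) < Real.exp 1 := Real.exp_one_gt_d9
      have he0 : (0 : ℝ) < Real.exp 1 := Real.exp_pos 1
      have helt : Real.exp 1 * Real.log t ≤ t := by
        have h := Real.log_le_sub_one_of_pos (show 0 < t / Real.exp 1 by positivity)
        rw [Real.log_div (ne_of_gt ht0) (ne_of_gt he0), Real.log_exp] at h
        have h2 : Real.log t ≤ t / Real.exp 1 := by linarith
        calc Real.exp 1 * Real.log t ≤ Real.exp 1 * (t / Real.exp 1) :=
              mul_le_mul_of_nonneg_left h2 he0.le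
          _ = t := by field_simp
      have hl2' : (0.6931471803 : ℝ) < Real.log 2 := Real.log_two_gt_d9
      -- key polynomial inequality: m * log n ≤ (n + 2m) * log 2
      have hpoly : (m : ℝ) * Real.log n ≤ ((n : ℝ) + 2 * m) * Real.log 2 := by
        have h1 : Real.exp 1 * ((m : ℝ) * Real.log n)
            ≤ Real.exp 1 * (t ^ 2 * Real.log n) :=
          mul_le_mul_of_nonneg_left (mul_le_mul_of_nonneg_right hmt hL.le) he0.le
        have h2 : Real.exp 1 * (t ^ 2 * Real.log n) ≤ 4 * t ^ 3 := by
          rw [hlt]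
          nlinarith [mul_le_mul_of_nonneg_left helt
            (show (0:ℝ) ≤ 4 * t ^ 2 by positivity)]
        have hel2 : (1.884 : ℝ) ≤ Real.exp 1 * Real.log 2 := by nlinarith [he, hl2', he0, hl2]
        have h3 : 4 * t ^ 3 ≤ (Real.exp 1 * Real.log 2) * (t ^ 4 + 2 * t ^ 2 - 2) := by
          nlinarith [sq_nonneg (t - 1.7),
            mul_nonneg (mul_nonneg (sub_nonneg.2 ht17) (sub_nonneg.2 ht17)) (sub_nonneg.2 ht17),
            mul_nonneg (sq_nonneg (t-1.7)) (sq_nonneg t), sq_nonneg t,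
            mul_nonneg (sub_nonneg.2 ht17) (sq_nonneg t)]
        have h4 : t ^ 4 + 2 * t ^ 2 - 2 ≤ (n : ℝ) + 2 * m := by
          rw [ht4]; nlinarith [htm]
        have h5 : (Real.exp 1 * Real.log 2) * (t ^ 4 + 2 * t ^ 2 - 2)
            ≤ Real.exp 1 * (((n : ℝ) + 2 * m) * Real.log 2) := by
          have := mul_le_mul_of_nonneg_left h4 (by positivity :
            (0:ℝ) ≤ Real.exp 1 * Real.log 2)
          linarith [this, (by ring : (Real.exp 1 * Real.log 2) * ((n : ℝ) + 2 * m)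
            = Real.exp 1 * (((n : ℝ) + 2 * m) * Real.log 2))]
        have h6 : Real.exp 1 * ((m : ℝ) * Real.log n)
            ≤ Real.exp 1 * (((n : ℝ) + 2 * m) * Real.log 2) := by linarith
        exact le_of_mul_le_mul_left h6 he0
      have h7 : (m : ℝ) / Real.log 2 ≤ ((n : ℝ) + 2 * m) / Real.log n := by
        rw [div_le_div_iff₀ hl2 hL]; linarith
      have h8' : ((n : ℝ) + 2 * m) / Real.log n + ((n : ℝ) - m) * (2 / Real.log n)
          = 3 * n / Real.log n := by
        field_simp; ring
      linarith
    calc (∑ j ∈ Finset.Ioc 0 m, 1 / Real.log (nthPrime j))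
          + ∑ j ∈ Finset.Ioc m n, 1 / Real.log (nthPrime j)
        ≤ (m : ℝ) / Real.log 2 + ((n : ℝ) - m) * (2 / Real.log n) := add_le_add hhead htail
      _ ≤ 3 * n / Real.log n := key
end

section
/- The reciprocal norm statistic over partitions with largest part exactly n and no part equal to 1 satisfies: W*_max(0) = 1 (from the empty partition), W*_max(1) = 0, and W*_max(n) = 1 for every n ≥ 2. Consequently, for every n ≥ 1, the reciprocal norm statistic summed over the infinite set of partitions with all parts at most n and no part equal to 1 satisfies C*_max(n) = n. -/
/-- The perimeter of a partition: its largest part plus the number of its parts,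
minus one; by convention the empty partition has perimeter `1`. -/
def perimeter (m : Multiset ℕ+) : ℕ :=
  if m = 0 then 1 else (m.map (fun i : ℕ+ => (i : ℕ))).sup + Multiset.card m - 1
/-- `W*_max(n)`: reciprocal norms summed over partitions with largest part
exactly `n` and no part equal to `1`. -/
noncomputable def WstarMax (n : ℕ) : ℝ :=
  ∑' lam : {m : Multiset ℕ+ // (m.map (fun i : ℕ+ => (i : ℕ))).sup = n ∧ (1 : ℕ+) ∉ m},
    (1 : ℝ) / (partitionNorm lam.1 : ℝ)

/-- `C*_max(n)`: reciprocal norms summed over partitions with all parts at most `n`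
and no part equal to `1`. -/
noncomputable def CstarMax (n : ℕ) : ℝ :=
  ∑' lam : {m : Multiset ℕ+ // (∀ i ∈ m, (i : ℕ) ≤ n) ∧ (1 : ℕ+) ∉ m},
    (1 : ℝ) / (partitionNorm lam.1 : ℝ)


lemma partitionNorm_pos (m : Multiset ℕ+) : 0 < partitionNorm m := by
  refine Multiset.prod_pos ?_
  intro x hx
  obtain ⟨i, _, rfl⟩ := Multiset.mem_map.mp hx
  exact i.pos

lemma partitionNorm_add (a b : Multiset ℕ+) :
    partitionNorm (a + b) = partitionNorm a * partitionNorm b := by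
  simp [partitionNorm]

lemma partitionNorm_replicate (a : ℕ) (k : ℕ+) :
    partitionNorm (Multiset.replicate a k) = (k : ℕ) ^ a := by
  simp [partitionNorm]

lemma replicate_count_add_filter (k : ℕ+) (m : Multiset ℕ+) :
    Multiset.replicate (m.count k) k + m.filter (fun i => ¬ i = k) = m := by
  ext b
  by_cases hb : b = k
  · subst hb; simp [Multiset.count_replicate, Multiset.count_filter]
  · simp [Multiset.count_replicate, Multiset.count_filter, hb]
    exact fun h => absurd h.symm hb

lemma count_repl_add (k : ℕ+) (a : ℕ) (r : Multiset ℕ+) (hk : k ∉ r) :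
    (Multiset.replicate a k + r).count k = a := by
  simp [Multiset.count_replicate, Multiset.count_eq_zero_of_notMem hk]

lemma filter_repl_add (k : ℕ+) (a : ℕ) (r : Multiset ℕ+) (hk : k ∉ r) :
    (Multiset.replicate a k + r).filter (fun i => ¬ i = k) = r := by
  ext b
  by_cases hb : b = k
  · subst hb
    simp [Multiset.count_filter, Multiset.count_eq_zero_of_notMem hk]
  · simp [Multiset.count_filter, hb, Multiset.count_replicate]
    exact fun h => absurd h.symm hb

/-- Partitions with all parts ≤ n and no part 1. -/
def Sn (n : ℕ) := {m : Multiset ℕ+ // (∀ i ∈ m, (i : ℕ) ≤ n) ∧ (1 : ℕ+) ∉ m}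

lemma sup_eq_iff (m : Multiset ℕ+) (n : ℕ) (hn : 1 ≤ n) :
    (m.map (fun i : ℕ+ => (i : ℕ))).sup = n ↔
      (∀ i ∈ m, (i : ℕ) ≤ n) ∧ ∃ i ∈ m, (i : ℕ) = n := by
  constructor
  · intro h
    have hle : ∀ i ∈ m, (i : ℕ) ≤ n := by
      intro i hi
      exact h ▸ Multiset.le_sup (Multiset.mem_map_of_mem _ hi)
    refine ⟨hle, ?_⟩
    by_contra hc
    push_neg at hc
    have : (m.map (fun i : ℕ+ => (i : ℕ))).sup ≤ n - 1 := by
      rw [Multiset.sup_le]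
      intro b hb
      obtain ⟨i, hi, rfl⟩ := Multiset.mem_map.mp hb
      have := hle i hi
      have := hc i hi
      omega
    omega
  · rintro ⟨hle, i, hi, hin⟩
    refine le_antisymm ?_ ?_
    · rw [Multiset.sup_le]
      intro b hb
      obtain ⟨j, hj, rfl⟩ := Multiset.mem_map.mp hb
      exact hle j hj
    · exact hin ▸ Multiset.le_sup (Multiset.mem_map_of_mem _ hi)

/-- splitting off the parts equal to n+1 -/
def equivC (n : ℕ) (hn : 1 ≤ n) : Sn (n + 1) ≃ ℕ × Sn n where
  toFun x :=
    ⟨x.1.count (show ℕ+ from ⟨n + 1, Nat.succ_pos n⟩),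
     ⟨x.1.filter (fun i => ¬ i = (show ℕ+ from ⟨n + 1, Nat.succ_pos n⟩)), by
       obtain ⟨m, hm1, hm2⟩ := x
       constructor
       · intro i hi
         rw [Multiset.mem_filter] at hi
         have h1 := hm1 i hi.1
         have h2 : (i : ℕ) ≠ n + 1 := by
           intro h
           exact hi.2 (PNat.coe_injective (by simpa using h))
         omega
       · intro h
         exact hm2 ((Multiset.mem_filter.mp h).1)⟩⟩
  invFun p :=
    ⟨Multiset.replicate p.1 (show ℕ+ from ⟨n + 1, Nat.succ_pos n⟩) + p.2.1, by
      obtain ⟨a, r, hr1, hr2⟩ := p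
      constructor
      · intro i hi
        rcases Multiset.mem_add.mp hi with h | h
        · rw [Multiset.eq_of_mem_replicate h]
          exact le_refl _
        · exact le_trans (hr1 i h) (by omega)
      · intro h
        rcases Multiset.mem_add.mp h with h | h
        · have h2 : (1 : ℕ) = n + 1 :=
            congrArg (fun x : ℕ+ => (x : ℕ)) (Multiset.eq_of_mem_replicate h)
          omega
        · exact hr2 h⟩
  left_inv x := Subtype.ext (replicate_count_add_filter _ _)
  right_inv p := by
    obtain ⟨a, r, hr1, hr2⟩ := p
    have hk : (⟨n + 1, n.succ_pos⟩ : ℕ+) ∉ r := by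
      intro h
      have h2 : n + 1 ≤ n := hr1 _ h
      omega
    exact Prod.ext (count_repl_add _ _ _ hk) (Subtype.ext (filter_repl_add _ _ _ hk))

/-- Partitions with largest part exactly n and no part 1. -/
def Wn (n : ℕ) := {m : Multiset ℕ+ // (m.map (fun i : ℕ+ => (i : ℕ))).sup = n ∧ (1 : ℕ+) ∉ m}

def equivW (n : ℕ) (hn : 1 ≤ n) : Wn (n + 1) ≃ ℕ × Sn n where
  toFun x :=
    ⟨x.1.count (show ℕ+ from ⟨n + 1, Nat.succ_pos n⟩) - 1,
     ⟨x.1.filter (fun i => ¬ i = (show ℕ+ from ⟨n + 1, Nat.succ_pos n⟩)), by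
       obtain ⟨m, hm1, hm2⟩ := x
       rw [sup_eq_iff m (n+1) (by omega)] at hm1
       constructor
       · intro i hi
         rw [Multiset.mem_filter] at hi
         have h1 := hm1.1 i hi.1
         have h2 : (i : ℕ) ≠ n + 1 := by
           intro h
           exact hi.2 (PNat.coe_injective (by simpa using h))
         omega
       · intro h
         exact hm2 ((Multiset.mem_filter.mp h).1)⟩⟩
  invFun p :=
    ⟨Multiset.replicate (p.1 + 1) (show ℕ+ from ⟨n + 1, Nat.succ_pos n⟩) + p.2.1, by
      obtain ⟨a, r, hr1, hr2⟩ := p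
      constructor
      · rw [sup_eq_iff _ (n+1) (by omega)]
        constructor
        · intro i hi
          rcases Multiset.mem_add.mp hi with h | h
          · rw [Multiset.eq_of_mem_replicate h]
            exact le_refl _
          · exact le_trans (hr1 i h) (by omega)
        · refine ⟨⟨n + 1, n.succ_pos⟩, ?_, rfl⟩
          exact Multiset.mem_add.mpr (Or.inl (Multiset.mem_replicate.mpr ⟨by omega, rfl⟩))
      · intro h
        rcases Multiset.mem_add.mp h with h | h
        · have h2 : (1 : ℕ) = n + 1 :=
            congrArg (fun x : ℕ+ => (x : ℕ)) (Multiset.eq_of_mem_replicate h)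
          omega
        · exact hr2 h⟩
  left_inv x := by
    apply Subtype.ext
    have hc : 1 ≤ x.1.count (show ℕ+ from ⟨n + 1, Nat.succ_pos n⟩) := by
      obtain ⟨m, hm1, hm2⟩ := x
      rw [sup_eq_iff m (n+1) (by omega)] at hm1
      obtain ⟨i, hi, hin⟩ := hm1.2
      have : i = (⟨n + 1, n.succ_pos⟩ : ℕ+) := PNat.coe_injective (by simpa using hin)
      rw [Multiset.one_le_count_iff_mem]
      exact this ▸ hi
    simp only
    rw [Nat.sub_add_cancel hc]
    exact replicate_count_add_filter _ _
  right_inv p := by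
    obtain ⟨a, r, hr1, hr2⟩ := p
    have hk : (⟨n + 1, n.succ_pos⟩ : ℕ+) ∉ r := by
      intro h
      have h2 : n + 1 ≤ n := hr1 _ h
      omega
    refine Prod.ext ?_ (Subtype.ext (filter_repl_add _ _ _ hk))
    simp only
    rw [count_repl_add _ _ _ hk]
    omega

open scoped ENNReal

noncomputable def TCs (n : ℕ) : ℝ≥0∞ := ∑' m : Sn n, ((partitionNorm m.1 : ℝ≥0∞))⁻¹
noncomputable def TWs (n : ℕ) : ℝ≥0∞ := ∑' m : Wn n, ((partitionNorm m.1 : ℝ≥0∞))⁻¹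

lemma norm_cast_ne_zero (m : Multiset ℕ+) : ((partitionNorm m : ℕ) : ℝ≥0∞) ≠ 0 :=
  Nat.cast_ne_zero.mpr (partitionNorm_pos m).ne'

lemma term_ne_top (m : Multiset ℕ+) : ((partitionNorm m : ℕ) : ℝ≥0∞)⁻¹ ≠ ⊤ :=
  ENNReal.inv_ne_top.mpr (norm_cast_ne_zero m)

lemma invfunC_norm (n : ℕ) (hn : 1 ≤ n) (p : ℕ × Sn n) :
    partitionNorm ((equivC n hn).symm p).1 = (n + 1) ^ p.1 * partitionNorm p.2.1 := by
  show partitionNorm (Multiset.replicate p.1 (show ℕ+ from ⟨n + 1, Nat.succ_pos n⟩) + p.2.1) = _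
  rw [partitionNorm_add, partitionNorm_replicate]
  rfl

lemma invfunW_norm (n : ℕ) (hn : 1 ≤ n) (p : ℕ × Sn n) :
    partitionNorm ((equivW n hn).symm p).1 = (n + 1) ^ (p.1 + 1) * partitionNorm p.2.1 := by
  show partitionNorm (Multiset.replicate (p.1 + 1) (show ℕ+ from ⟨n + 1, Nat.succ_pos n⟩) + p.2.1) = _
  rw [partitionNorm_add, partitionNorm_replicate]
  rfl

lemma term_split (n : ℕ) (a : ℕ) (m : Multiset ℕ+) :
    (((n + 1) ^ a * partitionNorm m : ℕ) : ℝ≥0∞)⁻¹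
      = (((n : ℝ≥0∞) + 1)⁻¹) ^ a * ((partitionNorm m : ℕ) : ℝ≥0∞)⁻¹ := by
  push_cast
  rw [ENNReal.mul_inv (Or.inl (pow_ne_zero _ (by simp))) (Or.inl (ENNReal.pow_ne_top (by finiteness))), ENNReal.inv_pow]

lemma TC_step (n : ℕ) (hn : 1 ≤ n) :
    TCs (n + 1) = (1 - ((n : ℝ≥0∞) + 1)⁻¹)⁻¹ * TCs n := by
  rw [TCs, ← Equiv.tsum_eq (equivC n hn).symm]
  have h : ∀ p : ℕ × Sn n, ((partitionNorm ((equivC n hn).symm p).1 : ℕ) : ℝ≥0∞)⁻¹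
      = (((n : ℝ≥0∞) + 1)⁻¹) ^ p.1 * ((partitionNorm p.2.1 : ℕ) : ℝ≥0∞)⁻¹ := by
    intro p
    rw [invfunC_norm n hn p, term_split]
  simp only [h]
  rw [ENNReal.tsum_prod (f := fun a (b : Sn n) =>
    (((n : ℝ≥0∞) + 1)⁻¹) ^ a * ((partitionNorm b.1 : ℕ) : ℝ≥0∞)⁻¹)]
  simp only [ENNReal.tsum_mul_left]
  rw [ENNReal.tsum_mul_right, ENNReal.tsum_geometric, TCs]

lemma geom_fact (n : ℕ) (hn : 1 ≤ n) :
    (1 - ((n : ℝ≥0∞) + 1)⁻¹)⁻¹ * (n : ℝ≥0∞) = (n : ℝ≥0∞) + 1 := by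
  have hn0 : (n : ℝ≥0∞) ≠ 0 := Nat.cast_ne_zero.mpr (by omega)
  have hne : ((n : ℝ≥0∞) + 1) ≠ 0 := by simp
  have hnt : ((n : ℝ≥0∞) + 1) ≠ ⊤ := by finiteness
  have h1 : (1 : ℝ≥0∞) - ((n : ℝ≥0∞) + 1)⁻¹ = (n : ℝ≥0∞) * ((n : ℝ≥0∞) + 1)⁻¹ := by
    refine ENNReal.sub_eq_of_eq_add (ENNReal.inv_ne_top.mpr hne) ?_
    conv_lhs => rw [← ENNReal.mul_inv_cancel hne hnt]
    rw [add_mul, one_mul]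
  rw [h1, ENNReal.mul_inv (Or.inl hn0) (Or.inl (ENNReal.natCast_ne_top n)), inv_inv,
    mul_comm ((n : ℝ≥0∞))⁻¹ _, mul_assoc,
    ENNReal.inv_mul_cancel hn0 (ENNReal.natCast_ne_top n), mul_one]

lemma Sn_one_eq (x : Sn 1) : x.1 = 0 := by
  obtain ⟨m, h1, h2⟩ := x
  by_contra hne
  obtain ⟨i, hi⟩ := Multiset.exists_mem_of_ne_zero hne
  have ha := h1 i hi
  have hb := i.pos
  have hco : (i : ℕ) = 1 := by omega
  exact h2 (PNat.coe_eq_one_iff.mp hco ▸ hi)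

def Sn.zero (n : ℕ) : Sn n :=
  ⟨0, fun i hi => absurd hi (Multiset.notMem_zero i), Multiset.notMem_zero 1⟩

lemma TC_one : TCs 1 = 1 := by
  have h : TCs 1 = ((partitionNorm (Sn.zero 1).1 : ℕ) : ℝ≥0∞)⁻¹ :=
    tsum_eq_single (Sn.zero 1) (fun b hb => absurd (Subtype.ext (Sn_one_eq b)) hb)
  rw [h]
  simp [Sn.zero, partitionNorm]

lemma TC_eq (n : ℕ) (hn : 1 ≤ n) : TCs n = (n : ℝ≥0∞) := by
  induction n with
  | zero => omega
  | succ n ih =>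
    rcases Nat.eq_zero_or_pos n with h | h
    · subst h; simpa using TC_one
    · rw [TC_step n h, ih h, geom_fact n h]
      push_cast
      ring

lemma TW_eq (n : ℕ) (hn : 1 ≤ n) : TWs (n + 1) = 1 := by
  rw [TWs, ← Equiv.tsum_eq (equivW n hn).symm]
  have h : ∀ p : ℕ × Sn n, ((partitionNorm ((equivW n hn).symm p).1 : ℕ) : ℝ≥0∞)⁻¹
      = (((n : ℝ≥0∞) + 1)⁻¹) ^ p.1 * ((((n : ℝ≥0∞) + 1)⁻¹) * ((partitionNorm p.2.1 : ℕ) : ℝ≥0∞)⁻¹) := by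
    intro p
    rw [invfunW_norm n hn p, term_split, pow_succ]
    ring
  simp only [h]
  rw [ENNReal.tsum_prod (f := fun a (b : Sn n) =>
    (((n : ℝ≥0∞) + 1)⁻¹) ^ a * ((((n : ℝ≥0∞) + 1)⁻¹) * ((partitionNorm b.1 : ℕ) : ℝ≥0∞)⁻¹))]
  simp only [ENNReal.tsum_mul_left]
  rw [ENNReal.tsum_mul_right, ENNReal.tsum_geometric, ← TCs, TC_eq n hn,
    mul_left_comm, geom_fact n hn, ENNReal.inv_mul_cancel (by simp) (by finiteness)]

lemma CstarMax_toReal (n : ℕ) : CstarMax n = (TCs n).toReal := by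
  rw [TCs, ENNReal.tsum_toReal_eq (f := fun m : Sn n => ((partitionNorm m.1 : ℕ) : ℝ≥0∞)⁻¹)
    (fun a => term_ne_top a.1)]
  unfold CstarMax
  apply tsum_congr
  intro b
  rw [one_div, ENNReal.toReal_inv]
  rfl

lemma WstarMax_toReal (n : ℕ) : WstarMax n = (TWs n).toReal := by
  rw [TWs, ENNReal.tsum_toReal_eq (f := fun m : Wn n => ((partitionNorm m.1 : ℕ) : ℝ≥0∞)⁻¹)
    (fun a => term_ne_top a.1)]
  unfold WstarMax
  apply tsum_congr
  intro b
  rw [one_div, ENNReal.toReal_inv]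
  rfl

def Wn.zero : Wn 0 := ⟨0, by simp, Multiset.notMem_zero 1⟩

lemma Wn_zero_eq (x : Wn 0) : x.1 = 0 := by
  obtain ⟨m, h1, h2⟩ := x
  by_contra hne
  obtain ⟨i, hi⟩ := Multiset.exists_mem_of_ne_zero hne
  have hle : (i : ℕ) ≤ 0 := h1 ▸ Multiset.le_sup (Multiset.mem_map_of_mem _ hi)
  exact absurd hle (by have := i.pos; omega)

theorem WstarMax_eq_and_CstarMax_eq :
    WstarMax 0 = 1 ∧ WstarMax 1 = 0 ∧ (∀ n : ℕ, 2 ≤ n → WstarMax n = 1) ∧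
    (∀ n : ℕ, 1 ≤ n → CstarMax n = (n : ℝ)) := by
  refine ⟨?_, ?_, ?_, ?_⟩
  · have h : WstarMax 0 = 1 / ((partitionNorm (Wn.zero).1 : ℝ)) :=
      by show ∑' lam : Wn 0, (1 : ℝ) / (partitionNorm lam.1 : ℝ) = _; exact tsum_eq_single Wn.zero (fun b hb => absurd (Subtype.ext (Wn_zero_eq b)) hb)
    rw [h]
    simp [Wn.zero, partitionNorm]
  · have hE : IsEmpty (Wn 1) := by
      constructor
      rintro ⟨m, h1, h2⟩
      rw [sup_eq_iff m 1 le_rfl] at h1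
      obtain ⟨i, hi, hin⟩ := h1.2
      exact h2 (PNat.coe_eq_one_iff.mp hin ▸ hi)
    have h : WstarMax 1 = ∑' lam : Wn 1, (1 : ℝ) / (partitionNorm lam.1 : ℝ) := rfl
    rw [h, tsum_empty]
  · intro n hn
    obtain ⟨m, rfl⟩ : ∃ m, n = m + 1 := ⟨n - 1, by omega⟩
    rw [WstarMax_toReal (m + 1), TW_eq m (by omega), ENNReal.toReal_one]
  · intro n hn
    rw [CstarMax_toReal, TC_eq n hn]
    rfl
end
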